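/- Let X₁, X₂, X₃ be independent random variables, each exponentially distributed with rates λ₁, λ₂, λ₃ > 0 respectively, and fix r ∈ (0, 1/2). Then as s → ∞, Pr[ (1+sX₁)(1+sX₂)(1+sX₃) < (1+s)^{2r} ] is asymptotically equivalent to 2·(r·ln s)²·λ₁λ₂λ₃·s^{−(3−2r)}, i.e. the ratio of the two quantities tends to 1. -/

import Mathlib

/-!
Put `t = (1 + s)^(2r)`. The joint density of `(X₀, X₁, X₂)` is at most `λ₀λ₁λ₂` on the positive
orthant and at least `λ₀λ₁λ₂ e^{-(λ₀+λ₁+λ₂)M}` on the cube `[0, M]³`, `M = (t - 1)/s`, which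
contains the outage region `{x ≥ 0 | ∏ (1 + s xᵢ) < t}`. That region is `s⁻¹` times the one for
`s = 1`, whose volume `W(t) = t (ln t)²/2 - t ln t + t - 1` is computed by slicing twice. Since
`2r < 1`, `M → 0`, so the outage probability is squeezed between two functions equivalent to
`λ₀λ₁λ₂ W(t)/s³ ~ λ₀λ₁λ₂ t (ln t)² / (2 s³) ~ 2 (r ln s)² λ₀λ₁λ₂ s^(2r-3)`.
-/

open MeasureTheory ProbabilityTheory Filter Asymptotics Real Set Topology
open scoped Pointwise

theorem Asymptotics.IsEquivalent.of_le_of_le {α : Type*} {l : Filter α} {f g h u : α → ℝ}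
    (hg : g ~[l] u) (hh : h ~[l] u) (hgf : ∀ᶠ x in l, g x ≤ f x) (hfh : ∀ᶠ x in l, f x ≤ h x) :
    f ~[l] u := by
  have hsum : (fun x => |g x - u x| + |h x - u x|) =o[l] u :=
    hg.isLittleO.abs_left.add hh.isLittleO.abs_left
  refine IsLittleO.isEquivalent (IsBigO.trans_isLittleO (IsBigO.of_bound 1 ?_) hsum)
  filter_upwards [hgf, hfh] with x hgx hhx
  rw [Pi.sub_apply, one_mul, Real.norm_eq_abs,
    Real.norm_of_nonneg (add_nonneg (abs_nonneg _) (abs_nonneg _))]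
  exact (abs_le_max_abs_abs (sub_le_sub_right hgx _) (sub_le_sub_right hhx _)).trans
    (max_le_add_of_nonneg (abs_nonneg _) (abs_nonneg _))

theorem setLIntegral_Icc_ofReal_eq_sub {f F : ℝ → ℝ} {a b : ℝ} (hab : a ≤ b)
    (hF : ∀ x ∈ Icc a b, HasDerivAt F (f x) x) (hf : ∀ x ∈ Icc a b, 0 ≤ f x) :
    ∫⁻ x in Icc a b, ENNReal.ofReal (f x) = ENNReal.ofReal (F b - F a) := by
  have hcont : ContinuousOn F (Icc a b) := fun x hx => (hF x hx).continuousAt.continuousWithinAt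
  have hmono : MonotoneOn F (Icc a b) :=
    monotoneOn_of_hasDerivWithinAt_nonneg (convex_Icc a b) hcont
      (fun x hx => (hF x (interior_subset hx)).hasDerivWithinAt)
      (fun x hx => hf x (interior_subset hx))
  rw [lintegral_deriv_eq_volume_image_of_monotoneOn measurableSet_Icc
      (fun x hx => (hF x hx).hasDerivWithinAt) hmono,
    hcont.image_Icc_of_monotoneOn hab hmono, Real.volume_Icc]

theorem volume_eq_ofReal_sub_of_slices {E : Type*} [MeasureSpace E] [SFinite (volume : Measure E)]
    {S : Set (ℝ × E)} (hS : MeasurableSet S) {a b : ℝ} (hab : a ≤ b) {f F : ℝ → ℝ}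
    (hin : ∀ x ∈ Icc a b, volume (Prod.mk x ⁻¹' S) = ENNReal.ofReal (f x))
    (hout : ∀ x ∉ Icc a b, Prod.mk x ⁻¹' S = ∅)
    (hF : ∀ x ∈ Icc a b, HasDerivAt F (f x) x) (hf : ∀ x ∈ Icc a b, 0 ≤ f x) :
    volume S = ENNReal.ofReal (F b - F a) := by
  have hslice : (fun x => volume (Prod.mk x ⁻¹' S)) =
      (Icc a b).indicator fun x => ENNReal.ofReal (f x) := by
    ext x
    by_cases hx : x ∈ Icc a b
    · rw [indicator_of_mem hx, hin x hx]
    · rw [indicator_of_notMem hx, hout x hx, measure_empty]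
  rw [Measure.volume_eq_prod, Measure.prod_apply hS, hslice,
    lintegral_indicator measurableSet_Icc, setLIntegral_Icc_ofReal_eq_sub hab hF hf]

namespace ProbabilityTheory

@[fun_prop]
lemma measurable_exponentialPDF (r : ℝ) : Measurable (exponentialPDF r) :=
  (measurable_exponentialPDFReal r).ennreal_ofReal

lemma exponentialPDF_le_ofReal {r : ℝ} (hr : 0 ≤ r) (x : ℝ) :
    exponentialPDF r x ≤ ENNReal.ofReal r := by
  rw [exponentialPDF_eq]
  split_ifs with hx
  · exact ENNReal.ofReal_le_ofReal
      (mul_le_of_le_one_right hr (exp_le_one_iff.2 (by nlinarith)))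
  · simp

lemma ofReal_mul_exp_le_exponentialPDF {r M x : ℝ} (hr : 0 ≤ r) (hx : x ∈ Icc 0 M) :
    ENNReal.ofReal (r * exp (-(r * M))) ≤ exponentialPDF r x := by
  rw [exponentialPDF_of_nonneg hx.1]
  exact ENNReal.ofReal_le_ofReal (by gcongr; exact hx.2)

lemma map_prodMk_prodMk_eq_prod {Ω β : Type*} [MeasurableSpace Ω] [MeasurableSpace β]
    {μ : Measure Ω} [IsFiniteMeasure μ] {X : Fin 3 → Ω → β} (hX : ∀ i, Measurable (X i))
    (hindep : iIndepFun X μ) :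
    μ.map (fun ω => (X 0 ω, X 1 ω, X 2 ω)) =
      (μ.map (X 0)).prod ((μ.map (X 1)).prod (μ.map (X 2))) := by
  have h12 : μ.map (fun ω => (X 1 ω, X 2 ω)) = (μ.map (X 1)).prod (μ.map (X 2)) :=
    (indepFun_iff_map_prod_eq_prod_map_map (hX 1).aemeasurable (hX 2).aemeasurable).1
      (hindep.indepFun (by decide))
  rw [← h12]
  exact (indepFun_iff_map_prod_eq_prod_map_map (hX 0).aemeasurable
    ((hX 1).prodMk (hX 2)).aemeasurable).1
    (hindep.indepFun_prodMk hX 1 2 0 (by decide) (by decide)).symm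

lemma expMeasure_prod_eq_withDensity (a b c : ℝ) :
    (expMeasure a).prod ((expMeasure b).prod (expMeasure c)) =
      volume.withDensity fun p : ℝ × ℝ × ℝ =>
        exponentialPDF a p.1 * (exponentialPDF b p.2.1 * exponentialPDF c p.2.2) := by
  change (volume.withDensity (exponentialPDF a)).prod
    ((volume.withDensity (exponentialPDF b)).prod (volume.withDensity (exponentialPDF c))) = _
  rw [prod_withDensity (by fun_prop) (by fun_prop), prod_withDensity (by fun_prop) (by fun_prop)]
  rfl

section ThreeExponentials

variable {a b c : ℝ}

lemma expMeasure_prod_apply_le (ha : 0 ≤ a) (hb : 0 ≤ b) (hc : 0 ≤ c) (S : Set (ℝ × ℝ × ℝ)) :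
    (expMeasure a).prod ((expMeasure b).prod (expMeasure c)) S ≤
      ENNReal.ofReal (a * b * c) * volume (S ∩ Ici 0) := by
  rw [expMeasure_prod_eq_withDensity, withDensity_apply']
  have hdens : ∀ p : ℝ × ℝ × ℝ,
      exponentialPDF a p.1 * (exponentialPDF b p.2.1 * exponentialPDF c p.2.2) ≤
        (Ici 0).indicator (fun _ => ENNReal.ofReal (a * b * c)) p := by
    intro p
    by_cases hp : p ∈ Ici 0
    · rw [indicator_of_mem hp, ENNReal.ofReal_mul (by positivity), ENNReal.ofReal_mul ha,
        mul_assoc]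
      gcongr <;> exact exponentialPDF_le_ofReal (by assumption) _
    · rw [indicator_of_notMem hp]
      simp only [mem_Ici, Prod.le_def, Prod.fst_zero, Prod.snd_zero, not_and_or, not_le] at hp
      rcases hp with h | h | h <;> simp [exponentialPDF_of_neg h]
  calc _ ≤ ∫⁻ p in S, (Ici 0).indicator (fun _ => ENNReal.ofReal (a * b * c)) p :=
        lintegral_mono hdens
    _ = _ := by
      rw [lintegral_indicator_const measurableSet_Ici, Measure.restrict_apply measurableSet_Ici,
        inter_comm]

lemma ofReal_mul_volume_le_expMeasure_prod_apply (ha : 0 ≤ a) (hb : 0 ≤ b) (hc : 0 ≤ c)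
    {M : ℝ} {R S : Set (ℝ × ℝ × ℝ)} (hRS : R ⊆ S)
    (hR : R ⊆ Icc 0 (M, M, M)) :
    ENNReal.ofReal (a * b * c * exp (-((a + b + c) * M))) * volume R ≤
      (expMeasure a).prod ((expMeasure b).prod (expMeasure c)) S := by
  have hsplit : a * b * c * exp (-((a + b + c) * M)) =
      a * exp (-(a * M)) * (b * exp (-(b * M)) * (c * exp (-(c * M)))) := by
    rw [show -((a + b + c) * M) = -(a * M) + -(b * M) + -(c * M) by ring, exp_add, exp_add]
    ring
  rw [← setLIntegral_const, hsplit, ENNReal.ofReal_mul (by positivity : 0 ≤ a * exp (-(a * M))),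
    ENNReal.ofReal_mul (by positivity : 0 ≤ b * exp (-(b * M)))]
  refine le_trans ?_ (measure_mono hRS)
  rw [expMeasure_prod_eq_withDensity, withDensity_apply']
  refine setLIntegral_mono (by fun_prop) fun p hp => ?_
  obtain ⟨⟨h0, h0', h0''⟩, ⟨hM, hM', hM''⟩⟩ := hR hp
  gcongr
  · exact ofReal_mul_exp_le_exponentialPDF ha ⟨h0, hM⟩
  · exact ofReal_mul_exp_le_exponentialPDF hb ⟨h0', hM'⟩
  · exact ofReal_mul_exp_le_exponentialPDF hc ⟨h0'', hM''⟩

end ThreeExponentials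

end ProbabilityTheory

namespace OutageThreeLinks

def outageSet (s t : ℝ) : Set (ℝ × ℝ × ℝ) :=
  {p | (1 + s * p.1) * (1 + s * p.2.1) * (1 + s * p.2.2) < t}

lemma measurableSet_outageSet (s t : ℝ) : MeasurableSet (outageSet s t) :=
  measurableSet_lt (by fun_prop) measurable_const

lemma measure_outage_eq_prod_map_apply {Ω : Type*} [MeasurableSpace Ω] {μ : Measure Ω}
    [IsFiniteMeasure μ] {X : Fin 3 → Ω → ℝ} (hX : ∀ i, Measurable (X i)) (hindep : iIndepFun X μ) (s t : ℝ) :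
    μ {ω | (1 + s * X 0 ω) * (1 + s * X 1 ω) * (1 + s * X 2 ω) < t} =
      (μ.map (X 0)).prod ((μ.map (X 1)).prod (μ.map (X 2))) (outageSet s t) := by
  rw [← map_prodMk_prodMk_eq_prod hX hindep,
    Measure.map_apply (by fun_prop) (measurableSet_outageSet s t)]
  rfl

lemma outageSet_inter_Ici_subset_Icc {s t : ℝ} (hs : 0 < s) :
    outageSet s t ∩ Ici 0 ⊆ Icc 0 ((t - 1) / s, (t - 1) / s, (t - 1) / s) := by
  rintro ⟨x, y, z⟩ ⟨hlt, hx, hy, hz⟩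
  simp only [outageSet, mem_ofPred_eq] at hlt
  simp only [Prod.fst_zero, Prod.snd_zero] at hx hy hz
  have hx' : 0 ≤ s * x := mul_nonneg hs.le hx
  have hy' : 0 ≤ s * y := mul_nonneg hs.le hy
  have hz' : 0 ≤ s * z := mul_nonneg hs.le hz
  refine ⟨⟨hx, hy, hz⟩, ?_, ?_, ?_⟩ <;> simp only <;> rw [le_div_iff₀ hs] <;>
    nlinarith [mul_nonneg hx' hy', mul_nonneg hx' hz', mul_nonneg hy' hz',
      mul_nonneg (mul_nonneg hx' hy') hz']

lemma outageSet_inter_Ici_eq_smul {s : ℝ} (hs : 0 < s) (t : ℝ) :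
    outageSet s t ∩ Ici 0 = s⁻¹ • (outageSet 1 t ∩ Ici 0) := by
  ext p
  rw [mem_smul_set_iff_inv_smul_mem₀ (inv_ne_zero hs.ne'), inv_inv]
  simp only [outageSet, mem_inter_iff, mem_ofPred_eq, mem_Ici, Prod.smul_fst, Prod.smul_snd,
    smul_eq_mul, one_mul, smul_nonneg_iff_nonneg_of_pos_left hs]

noncomputable def outageVolume (t : ℝ) : ℝ := t * log t ^ 2 / 2 - t * log t + t - 1

lemma outageVolume_nonneg {t : ℝ} (ht : 1 ≤ t) : 0 ≤ outageVolume t := by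
  have hL := log_nonneg ht
  have hexp : 1 + log t + log t ^ 2 / 2 ≤ t := by
    simpa [exp_log (by linarith : 0 < t)] using quadratic_le_exp_of_nonneg hL
  have hquad : 0 ≤ log t ^ 2 / 2 - log t + 1 := by nlinarith [sq_nonneg (log t - 1)]
  unfold outageVolume
  nlinarith [mul_le_mul_of_nonneg_right hexp hquad, pow_nonneg hL 4]

lemma volume_setOf_nonneg_one_add_mul_lt {u : ℝ} (hu : 1 ≤ u) :
    volume {q : ℝ × ℝ | 0 ≤ q ∧ (1 + q.1) * (1 + q.2) < u} =
      ENNReal.ofReal (u * log u - u + 1) := by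
  have hS : MeasurableSet {q : ℝ × ℝ | 0 ≤ q ∧ (1 + q.1) * (1 + q.2) < u} :=
    measurableSet_Ici.inter
      (measurableSet_lt (f := fun q : ℝ × ℝ => (1 + q.1) * (1 + q.2)) (by fun_prop)
        measurable_const)
  rw [volume_eq_ofReal_sub_of_slices hS (by linarith : (0 : ℝ) ≤ u - 1)
    (f := fun x => u / (1 + x) - 1) (F := fun x => u * log (1 + x) - x)]
  · congr 1
    simp only [add_sub_cancel, log_one, mul_zero, sub_zero, add_zero]
    ring
  · intro x hx
    have hx1 : 0 < 1 + x := by linarith [hx.1]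
    have : Prod.mk x ⁻¹' {q : ℝ × ℝ | 0 ≤ q ∧ (1 + q.1) * (1 + q.2) < u} =
        Ico 0 (u / (1 + x) - 1) := by
      ext z
      simp only [mem_preimage, mem_ofPred_eq, mem_Ico, Prod.le_def, Prod.fst_zero,
        Prod.snd_zero, lt_sub_iff_add_lt, lt_div_iff₀ hx1]
      constructor
      · rintro ⟨⟨-, hz⟩, h⟩; exact ⟨hz, by linarith⟩
      · rintro ⟨hz, h⟩; exact ⟨⟨hx.1, hz⟩, by linarith⟩
    rw [this, Real.volume_Ico, sub_zero]
  · intro x hx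
    ext z
    simp only [mem_preimage, mem_ofPred_eq, mem_empty_iff_false, iff_false, Prod.le_def,
      Prod.fst_zero, Prod.snd_zero, not_and, not_lt]
    rintro ⟨hx0, hz0⟩
    have : u - 1 < x := by simpa [mem_Icc, hx0] using hx
    nlinarith
  · intro x hx
    have hx1 : 0 < 1 + x := by linarith [hx.1]
    refine (((((hasDerivAt_id' x).const_add 1).log hx1.ne').const_mul u).sub
      (hasDerivAt_id' x)).congr_deriv ?_
    rw [mul_one_div]
  · intro x hx
    have hx1 : 0 < 1 + x := by linarith [hx.1]
    rw [sub_nonneg, le_div_iff₀ hx1]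
    linarith [hx.2]

lemma volume_outageSet_one_inter_Ici {t : ℝ} (ht : 1 ≤ t) :
    volume (outageSet 1 t ∩ Ici 0) = ENNReal.ofReal (outageVolume t) := by
  have ht0 : 0 < t := by linarith
  have hS : MeasurableSet (outageSet 1 t ∩ Ici 0) :=
    (measurableSet_outageSet 1 t).inter measurableSet_Ici
  rw [volume_eq_ofReal_sub_of_slices hS (by linarith : (0 : ℝ) ≤ t - 1)
    (f := fun x => t / (1 + x) * log (t / (1 + x)) - t / (1 + x) + 1)
    (F := fun x => -(t / 2) * (log t - log (1 + x)) ^ 2 + t * (log t - log (1 + x)) + x)]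
  · congr 1
    simp only [add_sub_cancel, sub_self, add_zero, log_one, sub_zero, outageVolume]
    ring
  · intro x hx
    have hx1 : 0 < 1 + x := by linarith [hx.1]
    have : Prod.mk x ⁻¹' (outageSet 1 t ∩ Ici 0) =
        {q : ℝ × ℝ | 0 ≤ q ∧ (1 + q.1) * (1 + q.2) < t / (1 + x)} := by
      ext q
      simp only [outageSet, mem_preimage, mem_inter_iff, mem_ofPred_eq, mem_Ici, one_mul,
        Prod.le_def, Prod.fst_zero, Prod.snd_zero, lt_div_iff₀ hx1]
      rw [mul_assoc, mul_comm (1 + x)]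
      have := hx.1
      tauto
    rw [this, volume_setOf_nonneg_one_add_mul_lt ((one_le_div hx1).2 (by linarith [hx.2]))]
  · intro x hx
    ext q
    simp only [outageSet, mem_preimage, mem_inter_iff, mem_ofPred_eq, mem_Ici, one_mul,
      Prod.le_def, Prod.fst_zero, Prod.snd_zero, mem_empty_iff_false, iff_false, not_and]
    intro hlt hx0 hq1 hq2
    have : t - 1 < x := by simpa [mem_Icc, hx0] using hx
    nlinarith [mul_nonneg hq1 hq2, mul_nonneg hx0 hq1, mul_nonneg hx0 hq2,
      mul_nonneg (mul_nonneg hx0 hq1) hq2]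
  · intro x hx
    have hx1 : 0 < 1 + x := by linarith [hx.1]
    have hℓ : HasDerivAt (fun y => log t - log (1 + y)) (0 - 1 / (1 + x)) x :=
      (hasDerivAt_const x (log t)).sub (((hasDerivAt_id' x).const_add 1).log hx1.ne')
    refine ((((hℓ.pow 2).const_mul (-(t / 2))).add (hℓ.const_mul t)).add
      (hasDerivAt_id' x)).congr_deriv ?_
    rw [log_div ht0.ne' hx1.ne']
    field_simp
    ring
  · intro x hx
    have hx1 : 0 < 1 + x := by linarith [hx.1]
    have hv : 0 < t / (1 + x) := div_pos ht0 hx1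
    have hlog := one_sub_inv_le_log_of_pos hv
    nlinarith [mul_le_mul_of_nonneg_left hlog hv.le, mul_inv_cancel₀ hv.ne']

lemma volume_outageSet_inter_Ici {s t : ℝ} (hs : 0 < s) (ht : 1 ≤ t) :
    volume (outageSet s t ∩ Ici 0) = ENNReal.ofReal (outageVolume t / s ^ 3) := by
  have : (volume : Measure (ℝ × ℝ)).IsAddHaarMeasure := Measure.prod.instIsAddHaarMeasure _ _
  have : (volume : Measure (ℝ × ℝ × ℝ)).IsAddHaarMeasure :=
    Measure.prod.instIsAddHaarMeasure _ _
  rw [outageSet_inter_Ici_eq_smul hs, Measure.addHaar_smul, volume_outageSet_one_inter_Ici ht,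
    ← ENNReal.ofReal_mul (abs_nonneg _)]
  congr 1
  simp [Module.finrank_prod, abs_of_pos hs]
  field_simp

lemma expMeasure_prod_outageSet_toReal_mem_Icc {a b c s t : ℝ} (ha : 0 < a) (hb : 0 < b)
    (hc : 0 < c) (hs : 0 < s) (ht : 1 ≤ t) :
    ((expMeasure a).prod ((expMeasure b).prod (expMeasure c)) (outageSet s t)).toReal ∈
      Icc (a * b * c * exp (-((a + b + c) * ((t - 1) / s))) * (outageVolume t / s ^ 3))
        (a * b * c * (outageVolume t / s ^ 3)) := by
  have := isProbabilityMeasure_expMeasure ha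
  have := isProbabilityMeasure_expMeasure hb
  have := isProbabilityMeasure_expMeasure hc
  have hW : 0 ≤ outageVolume t / s ^ 3 := div_nonneg (outageVolume_nonneg ht) (by positivity)
  have hvol := volume_outageSet_inter_Ici hs ht
  constructor
  · refine (ENNReal.ofReal_le_iff_le_toReal (measure_ne_top _ _)).1 ?_
    rw [ENNReal.ofReal_mul (by positivity), ← hvol]
    exact ofReal_mul_volume_le_expMeasure_prod_apply ha.le hb.le hc.le inter_subset_left
      (outageSet_inter_Ici_subset_Icc hs)
  · refine ENNReal.toReal_le_of_le_ofReal (by positivity) ?_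
    rw [ENNReal.ofReal_mul (by positivity), ← hvol]
    exact expMeasure_prod_apply_le ha.le hb.le hc.le _

lemma isEquivalent_outageVolume : outageVolume ~[atTop] fun t => t * log t ^ 2 / 2 := by
  have hone : ∀ {f : ℝ → ℝ}, Tendsto f atTop atTop → (fun _ => (1 : ℝ)) =o[atTop] f :=
    fun hf => (isLittleO_one_left_iff ℝ).2 (tendsto_norm_atTop_atTop.comp hf)
  have hlog : (fun t => t * log t) =o[atTop] fun t => t * log t ^ 2 / 2 :=
    ((isBigO_refl (fun t => t * log t) atTop).mul_isLittleO
      (hone (tendsto_log_atTop.atTop_div_const two_pos))).congr (fun t => by ring)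
      (fun t => by ring)
  have hid : (fun t => t) =o[atTop] fun t => t * log t ^ 2 / 2 :=
    ((isBigO_refl (fun t => t) atTop).mul_isLittleO
      (hone (((tendsto_pow_atTop two_ne_zero).comp tendsto_log_atTop).atTop_div_const
        two_pos))).congr (fun t => by ring) (fun t => by simp only [Function.comp]; ring)
  exact ((IsEquivalent.refl.sub_isLittleO hlog).add_isLittleO hid).sub_isLittleO
    ((hone tendsto_id).trans hid)

lemma isEquivalent_one_add_rpow (a : ℝ) : (fun s : ℝ => (1 + s) ^ a) ~[atTop] fun s => s ^ a := by
  have habs : (fun s : ℝ => 1 + s) ~[atTop] fun s => |s| :=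
    ((isLittleO_const_id_atTop 1).add_isEquivalent IsEquivalent.refl).trans_eventuallyEq
      (by filter_upwards [eventually_ge_atTop 0] with s hs using (abs_of_nonneg hs).symm)
  refine (habs.rpow fun _ => abs_nonneg _).trans_eventuallyEq ?_
  filter_upwards [eventually_ge_atTop 0] with s hs
  simp [abs_of_nonneg hs]

lemma tendsto_one_add_rpow_sub_one_div {a : ℝ} (ha : a < 1) :
    Tendsto (fun s : ℝ => ((1 + s) ^ a - 1) / s) atTop (𝓝 0) := by
  have h : (fun s : ℝ => (1 + s) ^ a / s) ~[atTop] fun s => s ^ (-(1 - a)) := by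
    refine ((isEquivalent_one_add_rpow a).div IsEquivalent.refl).trans_eventuallyEq ?_
    filter_upwards [eventually_gt_atTop 0] with s hs
    simp [neg_sub, rpow_sub_one hs.ne']
  have := (h.tendsto_nhds_iff.2 (tendsto_rpow_neg_atTop (by linarith))).sub
    tendsto_inv_atTop_zero
  simpa [sub_div] using this

lemma isEquivalent_outageVolume_div {r : ℝ} (hr : 0 < r) :
    (fun s : ℝ => outageVolume ((1 + s) ^ (2 * r)) / s ^ 3) ~[atTop]
      fun s => 2 * (r * log s) ^ 2 * s ^ (-(3 - 2 * r)) := by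
  have ht := isEquivalent_one_add_rpow (2 * r)
  have hpow : Tendsto (fun s : ℝ => s ^ (2 * r)) atTop atTop := tendsto_rpow_atTop (by positivity)
  have hW := isEquivalent_outageVolume.comp_tendsto (ht.symm.tendsto_atTop hpow)
  have hmain := (ht.mul ((ht.log hpow).pow 2)).div (IsEquivalent.refl (u := fun _ => (2 : ℝ)))
  refine ((hW.trans hmain).div IsEquivalent.refl).trans_eventuallyEq ?_
  filter_upwards [eventually_gt_atTop 0] with s hs
  simp only [Pi.div_apply, Pi.mul_apply, Pi.pow_apply, log_rpow hs]
  rw [show -(3 - 2 * r) = 2 * r - 3 by ring, rpow_sub hs, show (3 : ℝ) = ((3 : ℕ) : ℝ) by norm_num,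
    rpow_natCast]
  field_simp

end OutageThreeLinks

open OutageThreeLinks in
/-- the outage probability of a parallel fading channel with three
independent exponential links is asymptotically `2 (r ln s)² λ₁λ₂λ₃ s^{-(3-2r)}`. -/
theorem stmt_19
    {Ω : Type*} [MeasurableSpace Ω] (μ : Measure Ω) [IsProbabilityMeasure μ]
    (X : Fin 3 → Ω → ℝ) (lam : Fin 3 → ℝ) (hlam : ∀ i, 0 < lam i)
    (hmeas : ∀ i, Measurable (X i))
    (hindep : iIndepFun X μ)
    (hlaw : ∀ i, μ.map (X i) = expMeasure (lam i))
    (r : ℝ) (hr : r ∈ Set.Ioo (0:ℝ) (1/2)) :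
    (fun s : ℝ => (μ {ω |
        (1 + s * X 0 ω) * (1 + s * X 1 ω) * (1 + s * X 2 ω) < (1+s) ^ (2*r)}).toReal)
      ~[atTop]
      (fun s : ℝ =>
        2 * (r * Real.log s)^2 * (lam 0 * lam 1 * lam 2) * s ^ (-(3-2*r))) := by
  obtain ⟨hr0, hr1⟩ := hr
  set C := lam 0 * lam 1 * lam 2
  set v : ℝ → ℝ := fun s => outageVolume ((1 + s) ^ (2 * r)) / s ^ 3
  set d : ℝ → ℝ :=
    fun s => C * exp (-((lam 0 + lam 1 + lam 2) * (((1 + s) ^ (2 * r) - 1) / s)))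
  have hbounds : ∀ᶠ s in atTop, (μ {ω | (1 + s * X 0 ω) * (1 + s * X 1 ω) * (1 + s * X 2 ω) <
      (1 + s) ^ (2 * r)}).toReal ∈ Icc (d s * v s) (C * v s) := by
    filter_upwards [eventually_gt_atTop 0] with s hs
    rw [measure_outage_eq_prod_map_apply hmeas hindep, hlaw, hlaw, hlaw]
    exact expMeasure_prod_outageSet_toReal_mem_Icc (hlam 0) (hlam 1) (hlam 2) hs
      (one_le_rpow (by linarith) (by linarith))
  have hd : Tendsto d atTop (𝓝 C) := by
    convert ((tendsto_one_add_rpow_sub_one_div (a := 2 * r) (by linarith)).const_mul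
      (lam 0 + lam 1 + lam 2)).neg.rexp.const_mul C using 2
    rw [mul_zero, neg_zero, exp_zero, mul_one]
  have hCv : (fun s => C * v s) ~[atTop] fun s => 2 * (r * log s) ^ 2 * C * s ^ (-(3 - 2 * r)) :=
    ((IsEquivalent.refl (u := fun _ => C)).mul (isEquivalent_outageVolume_div hr0)).congr_right
      (.of_forall fun s => by simp only [Pi.mul_apply]; ring)
  have hdv : (fun s => d s * v s) ~[atTop] fun s => C * v s :=
    ((isEquivalent_const_iff_tendsto (mul_pos (mul_pos (hlam 0) (hlam 1)) (hlam 2)).ne').2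
      hd).mul IsEquivalent.refl
  exact IsEquivalent.of_le_of_le (hdv.trans hCv) hCv (hbounds.mono fun _ h => h.1)
    (hbounds.mono fun _ h => h.2)
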